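/- If x ≥ 1 then Γ(x,x) ≥ Γ(x)/x^x, and the inequality is reversed if 0 < x ≤ 1. -/

import Mathlib

/-!
Since `-log (1 - t) ≥ t` on `(0, 1)`, the integrand of `Γ(x, x)` dominates
`(-log t) ^ (x - 1) * t ^ (x - 1)` when `x ≥ 1` and is dominated by it when `x ≤ 1`. The
substitution `t = exp (-u)` turns the integral of the latter into
`∫₀^∞ u ^ (x - 1) * exp (-x u) du = Γ(x) / x ^ x`.
-/

open Real Set intervalIntegral

noncomputable def biGamma (x y : ℝ) : ℝ :=
  ∫ t in (0:ℝ)..1, (-Real.log t) ^ (x - 1) * (-Real.log (1 - t)) ^ (y - 1)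

open MeasureTheory

theorem setIntegral_mono_on_of_nonneg {α : Type*} [MeasurableSpace α] {μ : Measure α}
    {s : Set α} {f g : α → ℝ} (hs : MeasurableSet s) (hf : ∀ a ∈ s, 0 ≤ f a)
    (hg : IntegrableOn g s μ) (hfg : ∀ a ∈ s, f a ≤ g a) :
    ∫ a in s, f a ∂μ ≤ ∫ a in s, g a ∂μ :=
  integral_mono_of_nonneg (ae_restrict_of_forall_mem hs hf) hg (ae_restrict_of_forall_mem hs hfg)

theorem le_neg_log_one_sub {t : ℝ} (ht : t < 1) : t ≤ -log (1 - t) := by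
  linarith [log_le_sub_one_of_pos (sub_pos.2 ht)]

theorem image_exp_neg_Ioi : (fun u : ℝ => rexp (-u)) '' Ioi 0 = Ioo 0 1 := by
  ext t
  constructor
  · rintro ⟨u, hu, rfl⟩
    exact ⟨exp_pos _, exp_lt_one_iff.2 (neg_lt_zero.2 hu)⟩
  · rintro ⟨h0, h1⟩
    exact ⟨-log t, neg_pos.2 (log_neg h0 h1), by simp [exp_log h0]⟩

section SubstExpNeg

variable {E : Type*} [NormedAddCommGroup E] [NormedSpace ℝ E]

theorem hasDerivWithinAt_exp_neg (u : ℝ) (s : Set ℝ) :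
    HasDerivWithinAt (fun u : ℝ => rexp (-u)) (-rexp (-u)) s u := by
  simpa using ((hasDerivAt_neg u).exp).hasDerivWithinAt

theorem injOn_exp_neg (s : Set ℝ) : s.InjOn (fun u : ℝ => rexp (-u)) :=
  fun _ _ _ _ h => neg_injective (exp_injective h)

theorem integral_Ioo_zero_one_eq_integral_comp_exp_neg (g : ℝ → E) :
    ∫ t in Ioo 0 1, g t = ∫ u in Ioi 0, rexp (-u) • g (rexp (-u)) := by
  rw [← image_exp_neg_Ioi, integral_image_eq_integral_abs_deriv_smul measurableSet_Ioi
    (fun u _ => hasDerivWithinAt_exp_neg u _) (injOn_exp_neg _)]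
  simp [abs_of_pos (exp_pos _)]

theorem integrableOn_Ioo_zero_one_iff_comp_exp_neg (g : ℝ → E) :
    IntegrableOn g (Ioo 0 1) ↔ IntegrableOn (fun u => rexp (-u) • g (rexp (-u))) (Ioi 0) := by
  rw [← image_exp_neg_Ioi, integrableOn_image_iff_integrableOn_abs_deriv_smul measurableSet_Ioi
    (fun u _ => hasDerivWithinAt_exp_neg u _) (injOn_exp_neg _)]
  simp [abs_of_pos (exp_pos _)]

end SubstExpNeg

theorem exp_neg_mul_neg_log_exp_neg_rpow_mul_rpow (s b u : ℝ) :
    rexp (-u) * ((-log (rexp (-u))) ^ (s - 1) * rexp (-u) ^ (b - 1))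
      = u ^ (s - 1) * rexp (-(b * u)) := by
  rw [log_exp, neg_neg, ← exp_mul, mul_left_comm, ← exp_add]
  ring_nf

theorem integrableOn_neg_log_rpow_mul_rpow {s b : ℝ} (hs : 0 < s) (hb : 0 < b) :
    IntegrableOn (fun t => (-log t) ^ (s - 1) * t ^ (b - 1)) (Ioo 0 1) := by
  rw [integrableOn_Ioo_zero_one_iff_comp_exp_neg]
  refine (integrableOn_rpow_mul_exp_neg_mul_rpow (s := s - 1) (p := 1) (by linarith) one_pos
    hb).congr_fun (fun u _ => ?_) measurableSet_Ioi
  simp only [smul_eq_mul, exp_neg_mul_neg_log_exp_neg_rpow_mul_rpow, rpow_one, neg_mul]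

theorem integral_neg_log_rpow_mul_rpow {s b : ℝ} (hs : 0 < s) (hb : 0 < b) :
    ∫ t in Ioo 0 1, (-log t) ^ (s - 1) * t ^ (b - 1) = Gamma s / b ^ s := by
  simp only [integral_Ioo_zero_one_eq_integral_comp_exp_neg, smul_eq_mul,
    exp_neg_mul_neg_log_exp_neg_rpow_mul_rpow, integral_rpow_mul_exp_neg_mul_Ioi hs hb,
    one_div, inv_rpow hb.le, inv_mul_eq_div]

theorem integrableOn_neg_log_rpow {p : ℝ} (hp : -1 < p) :
    IntegrableOn (fun t => (-log t) ^ p) (Ioo 0 1) := by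
  simpa using integrableOn_neg_log_rpow_mul_rpow (s := p + 1) (b := 1) (by linarith) one_pos

theorem integrableOn_neg_log_one_sub_rpow {p : ℝ} (hp : -1 < p) :
    IntegrableOn (fun t => (-log (1 - t)) ^ p) (Ioo 0 1) := by
  have h := ((intervalIntegrable_iff_integrableOn_Ioo_of_le zero_le_one).2
    (integrableOn_neg_log_rpow hp)).comp_sub_left 1
  rw [sub_zero, sub_self] at h
  exact (intervalIntegrable_iff_integrableOn_Ioo_of_le zero_le_one).1 h.symm

theorem rpow_mul_rpow_le_rpow_add_rpow {a b p q : ℝ} (ha : 0 ≤ a) (hb : 0 ≤ b)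
    (hp : 0 ≤ p) (hq : 0 ≤ q) : a ^ p * b ^ q ≤ a ^ (p + q) + b ^ (p + q) := by
  wlog hab : a ≤ b generalizing a b p q
  · simpa [mul_comm, add_comm] using this hb ha hq hp (le_of_not_ge hab)
  calc a ^ p * b ^ q ≤ b ^ p * b ^ q := by gcongr
    _ = b ^ (p + q) := (rpow_add_of_nonneg hb hp hq).symm
    _ ≤ a ^ (p + q) + b ^ (p + q) := le_add_of_nonneg_left (by positivity)

theorem integrableOn_biGamma_integrand {x y : ℝ} (hx : 1 ≤ x) (hy : 1 ≤ y) :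
    IntegrableOn (fun t => (-log t) ^ (x - 1) * (-log (1 - t)) ^ (y - 1)) (Ioo 0 1) := by
  refine ((integrableOn_neg_log_rpow (p := x - 1 + (y - 1)) (by linarith)).add
    (integrableOn_neg_log_one_sub_rpow (p := x - 1 + (y - 1)) (by linarith))).mono'
    (Measurable.aestronglyMeasurable (by fun_prop))
    ((ae_restrict_iff' measurableSet_Ioo).2 (ae_of_all _ fun t ⟨h0, h1⟩ => ?_))
  have ha : 0 ≤ -log t := neg_nonneg.2 (log_nonpos h0.le h1.le)
  have hb : 0 ≤ -log (1 - t) := h0.le.trans (le_neg_log_one_sub h1)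
  rw [norm_of_nonneg (by positivity)]
  exact rpow_mul_rpow_le_rpow_add_rpow ha hb (sub_nonneg.2 hx) (sub_nonneg.2 hy)

theorem biGamma_eq_integral_Ioo (x y : ℝ) :
    biGamma x y = ∫ t in Ioo 0 1, (-log t) ^ (x - 1) * (-log (1 - t)) ^ (y - 1) := by
  rw [biGamma, integral_of_le zero_le_one, integral_Ioc_eq_integral_Ioo]

theorem biGamma_diag (x : ℝ) :
    (1 ≤ x → Real.Gamma x / x ^ x ≤ biGamma x x) ∧
    (0 < x → x ≤ 1 → biGamma x x ≤ Real.Gamma x / x ^ x) := by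
  have hlog : ∀ t ∈ Ioo (0 : ℝ) 1, 0 ≤ -log t :=
    fun t ht => neg_nonneg.2 (log_nonpos ht.1.le ht.2.le)
  have hlog_one_sub : ∀ t ∈ Ioo (0 : ℝ) 1, t ≤ -log (1 - t) :=
    fun t ht => le_neg_log_one_sub ht.2
  rw [biGamma_eq_integral_Ioo]
  refine ⟨fun hx => ?_, fun hx₀ hx => ?_⟩
  · rw [← integral_neg_log_rpow_mul_rpow (by linarith) (by linarith)]
    refine setIntegral_mono_on_of_nonneg measurableSet_Ioo
      (fun t ht => mul_nonneg (rpow_nonneg (hlog t ht) _) (rpow_nonneg ht.1.le _))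
      (integrableOn_biGamma_integrand hx hx) (fun t ht => ?_)
    exact mul_le_mul_of_nonneg_left
      (rpow_le_rpow ht.1.le (hlog_one_sub t ht) (sub_nonneg.2 hx)) (rpow_nonneg (hlog t ht) _)
  · rw [← integral_neg_log_rpow_mul_rpow hx₀ hx₀]
    refine setIntegral_mono_on_of_nonneg measurableSet_Ioo
      (fun t ht => mul_nonneg (rpow_nonneg (hlog t ht) _)
        (rpow_nonneg (ht.1.le.trans (hlog_one_sub t ht)) _))
      (integrableOn_neg_log_rpow_mul_rpow hx₀ hx₀) (fun t ht => ?_)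
    exact mul_le_mul_of_nonneg_left
      (rpow_le_rpow_of_nonpos ht.1 (hlog_one_sub t ht) (sub_nonpos.2 hx))
      (rpow_nonneg (hlog t ht) _)
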